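/- Bogomolny energy bound: under the same hypotheses, at λ = 1 the static 2D energy satisfies ∫_{ℝ²}(|D₁φ|² + |D₂φ|² + F₁₂² + (1/4)(|φ|²−1)²) ≥ |∫_{ℝ²} F₁₂|, with equality if and only if (φ, α) solves the Bogomolny equations (D₁ ± iD₂)φ = 0 and F₁₂ ± (1/2)(|φ|²−1) = 0 with the sign matching the sign of ∫ F₁₂. -/

import Mathlib

open MeasureTheory

/-- Partial derivative on ℝ² in coordinate direction `j` (j = 0 is x¹, j = 1 is x²). -/
noncomputable def pd2 (f : (Fin 2 → ℝ) → ℝ) (j : Fin 2) (x : Fin 2 → ℝ) : ℝ :=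
  fderiv ℝ f x (Pi.single j 1)

/-- Partial derivative of a complex-valued function on ℝ². -/
noncomputable def pdC2 (f : (Fin 2 → ℝ) → ℂ) (j : Fin 2) (x : Fin 2 → ℝ) : ℂ :=
  fderiv ℝ f x (Pi.single j 1)

/-- Covariant derivative D_j = ∂_j − i α_j on ℝ². -/
noncomputable def covD2 (α : Fin 2 → (Fin 2 → ℝ) → ℝ)
    (j : Fin 2) (φ : (Fin 2 → ℝ) → ℂ) : (Fin 2 → ℝ) → ℂ :=
  fun x => pdC2 φ j x - Complex.I * (α j x : ℂ) * φ x

/-- Magnetic field F₁₂ = ∂₁α₂ − ∂₂α₁. -/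
noncomputable def F12 (α : Fin 2 → (Fin 2 → ℝ) → ℝ) (x : Fin 2 → ℝ) : ℝ :=
  pd2 (α 1) 0 x - pd2 (α 0) 1 x

/-! ### Auxiliary lemmas -/

lemma integral_pd2_eq_zero (f : (Fin 2 → ℝ) → ℝ) (hf : ContDiff ℝ (⊤ : ℕ∞) f)
    (hsupp : HasCompactSupport f) (j : Fin 2) : ∫ x, pd2 f j x = 0 := by
  obtain ⟨R, hR0, hR⟩ := hsupp.isCompact.isBounded.subset_ball_lt 0 0
  set a : Fin 2 → ℝ := fun _ => -R with ha
  set b : Fin 2 → ℝ := fun _ => R with hb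
  have hab : a ≤ b := fun i => by simp [a, b]; linarith
  have hnorm : ∀ y : Fin 2 → ℝ, (∃ i, |y i| ≥ R) → f y = 0 := by
    intro y ⟨i, hi⟩
    apply image_eq_zero_of_notMem_tsupport
    intro hy
    have h1 := hR hy
    rw [Metric.mem_ball, dist_zero_right] at h1
    have h2 : |y i| ≤ ‖y‖ := by simpa using norm_le_pi_norm y i
    linarith
  have hball : Metric.ball (0 : Fin 2 → ℝ) R ⊆ Set.Icc a b := by
    intro x hx
    rw [Metric.mem_ball, dist_zero_right] at hx
    constructor <;> intro i <;>
      · have h2 : |x i| ≤ ‖x‖ := by simpa using norm_le_pi_norm x i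
        have := abs_le.mp (le_of_lt (lt_of_le_of_lt h2 hx))
        simp [a, b]; linarith [this.1, this.2]
  have hd : Differentiable ℝ f := hf.differentiable (by simp)
  have hcont : Continuous (pd2 f j) := by
    have h1 : Continuous (fderiv ℝ f) := (hf.fderiv_right (m := (⊤ : ℕ∞)) (by simp)).continuous
    exact (ContinuousLinearMap.apply ℝ ℝ (Pi.single j 1)).continuous.comp h1
  have hout : ∀ x ∉ Set.Icc a b, pd2 f j x = 0 := by
    intro x hx
    have hx' : x ∉ tsupport f := fun h => hx (hball (hR h))
    have h0 : fderiv ℝ f x = 0 := by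
      by_contra h
      exact hx' (support_fderiv_subset ℝ (by simpa using h))
    simp [pd2, h0]
  rw [← setIntegral_eq_integral_of_forall_compl_eq_zero hout]
  set fam : Fin 2 → (Fin 2 → ℝ) → ℝ := fun i x => if i = j then f x else 0 with hfam
  set fam' : Fin 2 → (Fin 2 → ℝ) → (Fin 2 → ℝ) →L[ℝ] ℝ :=
    fun i x => if i = j then fderiv ℝ f x else 0 with hfam'
  have hsum : ∀ x, (∑ i : Fin 2, fam' i x (Pi.single i 1)) = pd2 f j x := by
    intro x
    fin_cases j <;> simp [fam', Fin.sum_univ_two, pd2]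
  have key := integral_divergence_of_hasFDerivAt_off_countable'
      (n := 1) a b hab fam fam' ∅ Set.countable_empty
      (fun i => by
        by_cases h : i = j
        · subst h; simpa [fam] using hf.continuous.continuousOn
        · simp only [hfam, if_neg h]; exact continuousOn_const)
      (fun x _ i => by
        by_cases h : i = j
        · subst h; simpa [fam, fam'] using (hd x).hasFDerivAt
        · simp only [hfam, hfam', if_neg h]; exact hasFDerivAt_const (0 : ℝ) x)
      (by
        apply ContinuousOn.integrableOn_compact isCompact_Icc
        apply Continuous.continuousOn
        simp only [hsum]
        exact hcont)
  rw [show (fun x => ∑ i : Fin 2, fam' i x (Pi.single i 1)) = pd2 f j from funext hsum] at key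
  rw [key]
  refine Finset.sum_eq_zero fun i _ => ?_
  have hface : ∀ (c : ℝ), |c| ≥ R → ∀ x : Fin 1 → ℝ, fam i (i.insertNth c x) = 0 := by
    intro c hc x
    by_cases h : i = j
    · subst h
      simp only [hfam, if_pos rfl]
      exact hnorm _ ⟨i, by rw [Fin.insertNth_apply_same]; exact hc⟩
    · simp [hfam, h]
  rw [setIntegral_congr_fun measurableSet_Icc
      (fun x _ => hface (b i) (by simp [hb, abs_of_nonneg hR0.le]) x),
    setIntegral_congr_fun measurableSet_Icc
      (fun x _ => hface (a i) (by simp [ha, abs_of_nonpos (by linarith : -R ≤ 0)]) x)]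
  simp

lemma contDiff_pdC2 {φ : (Fin 2 → ℝ) → ℂ} (hφ : ContDiff ℝ (⊤ : ℕ∞) φ) (j : Fin 2) :
    ContDiff ℝ (⊤ : ℕ∞) (pdC2 φ j) := by
  have h := (hφ.fderiv_right (m := (⊤ : ℕ∞)) (by simp)).clm_apply (contDiff_const (c := Pi.single j 1))
  exact h

lemma contDiff_covD2 {φ : (Fin 2 → ℝ) → ℂ} {α : Fin 2 → (Fin 2 → ℝ) → ℝ}
    (hφ : ContDiff ℝ (⊤ : ℕ∞) φ) (hα : ∀ j, ContDiff ℝ (⊤ : ℕ∞) (α j)) (j : Fin 2) :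
    ContDiff ℝ (⊤ : ℕ∞) (covD2 α j φ) := by
  refine (contDiff_pdC2 hφ j).sub ?_
  exact (contDiff_const.mul (Complex.ofRealCLM.contDiff.comp (hα j))).mul hφ

lemma contDiff_J {φ : (Fin 2 → ℝ) → ℂ} {α : Fin 2 → (Fin 2 → ℝ) → ℝ}
    (hφ : ContDiff ℝ (⊤ : ℕ∞) φ) (hα : ∀ j, ContDiff ℝ (⊤ : ℕ∞) (α j)) (j : Fin 2) :
    ContDiff ℝ (⊤ : ℕ∞) (fun y => ((starRingEnd ℂ) (φ y) * covD2 α j φ y).im) := by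
  refine Complex.imCLM.contDiff.comp (ContDiff.mul ?_ (contDiff_covD2 hφ hα j))
  exact (Complex.conjCLE : ℂ ≃L[ℝ] ℂ).contDiff.comp hφ

lemma hcs_J {φ : (Fin 2 → ℝ) → ℂ} {α : Fin 2 → (Fin 2 → ℝ) → ℝ} (j : Fin 2)
    (hdecay2 : HasCompactSupport (covD2 α j φ)) :
    HasCompactSupport (fun y => ((starRingEnd ℂ) (φ y) * covD2 α j φ y).im) := by
  apply hdecay2.mono
  intro x hx
  simp only [Function.mem_support, ne_eq] at hx ⊢
  intro h
  exact hx (by simp [h])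

/-- The key derivative formula for the supercurrent `J_j = Im(conj φ · D_j φ)`. -/
lemma pd2_J (φ : (Fin 2 → ℝ) → ℂ) (α : Fin 2 → (Fin 2 → ℝ) → ℝ)
    (hφ : ContDiff ℝ (⊤ : ℕ∞) φ) (hα : ∀ j, ContDiff ℝ (⊤ : ℕ∞) (α j)) (j k : Fin 2) (x : Fin 2 → ℝ) :
    pd2 (fun y => ((starRingEnd ℂ) (φ y) * covD2 α j φ y).im) k x
      = ((starRingEnd ℂ) (pdC2 φ k x) * covD2 α j φ x).im
        + ((starRingEnd ℂ) (φ x) *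
            (fderiv ℝ (fderiv ℝ φ) x (Pi.single k 1) (Pi.single j 1)
              - Complex.I * (pd2 (α j) k x : ℂ) * φ x
              - Complex.I * (α j x : ℂ) * pdC2 φ k x)).im := by
  have hA : HasFDerivAt φ (fderiv ℝ φ x) x := (hφ.differentiable (by simp) x).hasFDerivAt
  have hB : HasFDerivAt (fderiv ℝ φ) (fderiv ℝ (fderiv ℝ φ) x) x :=
    (((hφ.fderiv_right (m := (⊤ : ℕ∞)) (by simp)).differentiable (by simp)) x).hasFDerivAt
  have hpj0 := (ContinuousLinearMap.apply ℝ ℂ (Pi.single j 1)).hasFDerivAt.comp x hB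
  have hpj : HasFDerivAt (pdC2 φ j)
      ((ContinuousLinearMap.apply ℝ ℂ (Pi.single j 1)).comp (fderiv ℝ (fderiv ℝ φ) x)) x := hpj0
  have hαj : HasFDerivAt (α j) (fderiv ℝ (α j) x) x :=
    ((hα j).differentiable (by simp) x).hasFDerivAt
  have hαjC : HasFDerivAt (fun y => ((α j y : ℝ) : ℂ))
      (Complex.ofRealCLM.comp (fderiv ℝ (α j) x)) x :=
    Complex.ofRealCLM.hasFDerivAt.comp x hαj
  have hIαφ := ((hαjC.const_mul Complex.I).mul hA)
  have hD : HasFDerivAt (covD2 α j φ) _ x := hpj.sub hIαφ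
  have hconj : HasFDerivAt (fun y => (starRingEnd ℂ) (φ y))
      ((Complex.conjCLE : ℂ ≃L[ℝ] ℂ).toContinuousLinearMap.comp (fderiv ℝ φ x)) x :=
    (Complex.conjCLE.toContinuousLinearMap.hasFDerivAt).comp x hA
  have hJ0 := Complex.imCLM.hasFDerivAt.comp x (hconj.mul hD)
  have hJ : HasFDerivAt (fun y => ((starRingEnd ℂ) (φ y) * covD2 α j φ y).im) _ x := hJ0
  rw [pd2, hJ.fderiv]
  simp only [ContinuousLinearMap.comp_apply, ContinuousLinearMap.add_apply,
    ContinuousLinearMap.smul_apply, ContinuousLinearMap.sub_apply,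
    ContinuousLinearMap.coe_comp', Function.comp_apply,
    ContinuousLinearMap.apply_apply, Complex.ofRealCLM_apply,
    ContinuousLinearEquiv.coe_coe, Complex.conjCLE_apply, Complex.imCLM_apply,
    smul_eq_mul, map_add, map_sub, map_mul]
  simp only [pdC2, covD2, pd2]
  ring_nf

/-- The pointwise Bogomolny completion identity. -/
lemma bogomolny_pointwise (φ : (Fin 2 → ℝ) → ℂ) (α : Fin 2 → (Fin 2 → ℝ) → ℝ)
    (hφ : ContDiff ℝ (⊤ : ℕ∞) φ) (hα : ∀ j, ContDiff ℝ (⊤ : ℕ∞) (α j))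
    (s : ℝ) (hs : s = 1 ∨ s = -1) (x : Fin 2 → ℝ) :
    (‖covD2 α 0 φ x‖) ^ 2 + (‖covD2 α 1 φ x‖) ^ 2
        + (F12 α x) ^ 2 + (1 / 4) * ((‖φ x‖) ^ 2 - 1) ^ 2
      = (‖covD2 α 0 φ x + (s : ℂ) * Complex.I * covD2 α 1 φ x‖) ^ 2
        + (F12 α x + s * (1 / 2) * ((‖φ x‖) ^ 2 - 1)) ^ 2
        + s * (pd2 (fun y => ((starRingEnd ℂ) (φ y) * covD2 α 1 φ y).im) 0 x
              - pd2 (fun y => ((starRingEnd ℂ) (φ y) * covD2 α 0 φ y).im) 1 x)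
        + s * F12 α x := by
  have hsymm : fderiv ℝ (fderiv ℝ φ) x (Pi.single (0 : Fin 2) 1) (Pi.single (1 : Fin 2) 1)
      = fderiv ℝ (fderiv ℝ φ) x (Pi.single (1 : Fin 2) 1) (Pi.single (0 : Fin 2) 1) :=
    (hφ.contDiffAt.isSymmSndFDerivAt (by rw [minSmoothness_of_isRCLikeNormedField]; exact WithTop.coe_le_coe.mpr (le_top : (2 : ℕ∞) ≤ ⊤))).eq _ _
  rw [pd2_J φ α hφ hα 1 0 x, pd2_J φ α hφ hα 0 1 x, hsymm]
  simp only [Complex.sq_norm, Complex.normSq_apply, covD2, F12,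
    Complex.add_re, Complex.add_im, Complex.sub_re, Complex.sub_im,
    Complex.mul_re, Complex.mul_im, Complex.I_re, Complex.I_im,
    Complex.ofReal_re, Complex.ofReal_im, Complex.conj_re, Complex.conj_im]
  rcases hs with rfl | rfl <;> ring

/-- Bogomolny energy bound: the static 2D energy at λ = 1 dominates |∫ F₁₂|, with
equality iff (φ, α) solves the Bogomolny equations with the sign matching that of ∫ F₁₂. -/
theorem bogomolny_energy_bound
    (φ : (Fin 2 → ℝ) → ℂ) (α : Fin 2 → (Fin 2 → ℝ) → ℝ)
    (hφ : ContDiff ℝ (⊤ : ℕ∞) φ) (hα : ∀ j, ContDiff ℝ (⊤ : ℕ∞) (α j))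
    (hdecay1 : HasCompactSupport (fun x => (‖φ x‖) ^ 2 - 1))
    (hdecay2 : ∀ j, HasCompactSupport (covD2 α j φ))
    (hdecay3 : HasCompactSupport (F12 α)) :
    |∫ x, F12 α x| ≤ ∫ x, ((‖covD2 α 0 φ x‖) ^ 2 + (‖covD2 α 1 φ x‖) ^ 2
        + (F12 α x) ^ 2 + (1 / 4) * ((‖φ x‖) ^ 2 - 1) ^ 2)
    ∧ ((∫ x, ((‖covD2 α 0 φ x‖) ^ 2 + (‖covD2 α 1 φ x‖) ^ 2
        + (F12 α x) ^ 2 + (1 / 4) * ((‖φ x‖) ^ 2 - 1) ^ 2)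
          = |∫ x, F12 α x| ↔
        ∃ sgn : ℝ, (sgn = 1 ∨ sgn = -1) ∧ 0 ≤ sgn * ∫ x, F12 α x ∧
          ∀ x, covD2 α 0 φ x + (sgn : ℂ) * Complex.I * covD2 α 1 φ x = 0 ∧
            F12 α x + sgn * (1 / 2) * ((‖φ x‖) ^ 2 - 1) = 0)) := by
  -- abbreviations
  set w : (Fin 2 → ℝ) → ℝ := fun x => (‖φ x‖) ^ 2 - 1 with hw
  -- continuity facts
  have hcCov : ∀ j, Continuous (covD2 α j φ) :=
    fun j => (contDiff_covD2 hφ hα j).continuous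
  have hcF : Continuous (F12 α) := by
    have h1 : ∀ j k : Fin 2, Continuous (pd2 (α j) k) := by
      intro j k
      have h2 : Continuous (fderiv ℝ (α j)) := ((hα j).fderiv_right (m := (⊤ : ℕ∞)) (by simp)).continuous
      exact (ContinuousLinearMap.apply ℝ ℝ (Pi.single k 1)).continuous.comp h2
    exact (h1 1 0).sub (h1 0 1)
  have hcw : Continuous w := by
    have : Continuous fun x => ‖φ x‖ := continuous_norm.comp hφ.continuous
    continuity
  -- the energy integrand, its continuity, compact support, integrability
  set e : (Fin 2 → ℝ) → ℝ := fun x =>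
    (‖covD2 α 0 φ x‖) ^ 2 + (‖covD2 α 1 φ x‖) ^ 2
      + (F12 α x) ^ 2 + (1 / 4) * (w x) ^ 2 with he
  have habs2 : ∀ (f : (Fin 2 → ℝ) → ℂ), HasCompactSupport f → Continuous f →
      Integrable (fun x => (‖f x‖) ^ 2) := by
    intro f hf hcf
    have hsupp : HasCompactSupport (fun x => (‖f x‖) ^ 2) := by
      apply hf.mono
      intro x hx
      simp only [Function.mem_support, ne_eq] at hx ⊢
      intro h; exact hx (by simp [h])
    exact ((continuous_norm.comp hcf).pow 2).integrable_of_hasCompactSupport hsupp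
  have hsq : ∀ (f : (Fin 2 → ℝ) → ℝ), HasCompactSupport f → Continuous f →
      Integrable (fun x => (f x) ^ 2) := by
    intro f hf hcf
    have hsupp : HasCompactSupport (fun x => (f x) ^ 2) := by
      apply hf.mono
      intro x hx
      simp only [Function.mem_support, ne_eq] at hx ⊢
      intro h; exact hx (by simp [h])
    exact (hcf.pow 2).integrable_of_hasCompactSupport hsupp
  have hiF : Integrable (F12 α) := hcF.integrable_of_hasCompactSupport hdecay3
  have hie : Integrable e := by
    refine (((habs2 _ (hdecay2 0) (hcCov 0)).add (habs2 _ (hdecay2 1) (hcCov 1))).add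
      (hsq _ hdecay3 hcF)).add ?_
    exact ((hsq _ hdecay1 hcw).const_mul (1 / 4))
  -- the Bogomolny-completed integrand for a sign s
  have main : ∀ s : ℝ, s = 1 ∨ s = -1 →
      (∫ x, e x) = (∫ x, ((‖covD2 α 0 φ x + (s : ℂ) * Complex.I * covD2 α 1 φ x‖) ^ 2
          + (F12 α x + s * (1 / 2) * w x) ^ 2)) + s * ∫ x, F12 α x := by
    intro s hs
    set G : (Fin 2 → ℝ) → ℝ := fun x =>
      (‖covD2 α 0 φ x + (s : ℂ) * Complex.I * covD2 α 1 φ x‖) ^ 2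
        + (F12 α x + s * (1 / 2) * w x) ^ 2 with hG
    set J : Fin 2 → (Fin 2 → ℝ) → ℝ :=
      fun j => fun y => ((starRingEnd ℂ) (φ y) * covD2 α j φ y).im with hJ
    have hsum : HasCompactSupport (fun x => covD2 α 0 φ x + (s : ℂ) * Complex.I * covD2 α 1 φ x) := by
      refine (hdecay2 0).add ?_
      apply (hdecay2 1).mono
      intro x hx
      simp only [Function.mem_support, ne_eq] at hx ⊢
      intro h; exact hx (by simp [h])
    have hsum2 : HasCompactSupport (fun x => F12 α x + s * (1 / 2) * w x) := by
      refine hdecay3.add ?_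
      apply hdecay1.mono
      intro x hx
      simp only [Function.mem_support, ne_eq] at hx ⊢
      intro h
      apply hx
      rw [h]; ring
    have hcsum : Continuous (fun x => covD2 α 0 φ x + (s : ℂ) * Complex.I * covD2 α 1 φ x) :=
      (hcCov 0).add (continuous_const.mul (hcCov 1))
    have hcsum2 : Continuous (fun x => F12 α x + s * (1 / 2) * w x) :=
      hcF.add (continuous_const.mul hcw)
    have hiG : Integrable G := (habs2 _ hsum hcsum).add (hsq _ hsum2 hcsum2)
    have hipd : ∀ j k, Integrable (pd2 (J j) k) := by
      intro j k
      have hcd : ContDiff ℝ (⊤ : ℕ∞) (J j) := contDiff_J hφ hα j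
      have hsupp : HasCompactSupport (J j) := hcs_J j (hdecay2 j)
      have hsupp' : HasCompactSupport (pd2 (J j) k) := by
        apply (hsupp.fderiv ℝ).mono
        intro x hx
        simp only [Function.mem_support, ne_eq] at hx ⊢
        intro h; exact hx (by simp [pd2, h])
      have hcont : Continuous (pd2 (J j) k) := by
        have h2 : Continuous (fderiv ℝ (J j)) := (hcd.fderiv_right (m := (⊤ : ℕ∞)) (by simp)).continuous
        exact (ContinuousLinearMap.apply ℝ ℝ (Pi.single k 1)).continuous.comp h2
      exact hcont.integrable_of_hasCompactSupport hsupp'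
    have hpoint : ∀ x, e x = G x + (s * pd2 (J 1) 0 x - s * pd2 (J 0) 1 x + s * F12 α x) := by
      intro x
      have := bogomolny_pointwise φ α hφ hα s hs x
      simp only [he, hG, hJ, hw]
      rw [this]; ring
    calc (∫ x, e x) = ∫ x, (G x + (s * pd2 (J 1) 0 x - s * pd2 (J 0) 1 x + s * F12 α x)) := by
            exact integral_congr_ae (Filter.Eventually.of_forall hpoint)
      _ = (∫ x, G x) + ((s * ∫ x, pd2 (J 1) 0 x) - (s * ∫ x, pd2 (J 0) 1 x)
            + s * ∫ x, F12 α x) := by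
            have hA : Integrable (fun x => s * pd2 (J 1) 0 x) := (hipd 1 0).const_mul s
            have hB : Integrable (fun x => s * pd2 (J 0) 1 x) := (hipd 0 1).const_mul s
            have hC : Integrable (fun x => s * F12 α x) := hiF.const_mul s
            have hAB : Integrable (fun x => s * pd2 (J 1) 0 x - s * pd2 (J 0) 1 x) := by
              exact hA.sub hB
            have hrest : Integrable
                (fun x => s * pd2 (J 1) 0 x - s * pd2 (J 0) 1 x + s * F12 α x) := by
              exact hAB.add hC
            rw [integral_add hiG hrest, integral_add hAB hC, integral_sub hA hB,
              integral_const_mul, integral_const_mul, integral_const_mul]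
      _ = (∫ x, G x) + s * ∫ x, F12 α x := by
            rw [integral_pd2_eq_zero _ (contDiff_J hφ hα 1) (hcs_J 1 (hdecay2 1)),
              integral_pd2_eq_zero _ (contDiff_J hφ hα 0) (hcs_J 0 (hdecay2 0))]
            ring
  -- nonnegativity of the completed integrand
  have hGnn : ∀ (s : ℝ) x, 0 ≤ (‖covD2 α 0 φ x + (s : ℂ) * Complex.I * covD2 α 1 φ x‖) ^ 2
      + (F12 α x + s * (1 / 2) * w x) ^ 2 := by
    intro s x
    positivity
  have hGint_nn : ∀ s : ℝ, 0 ≤ ∫ x, ((‖covD2 α 0 φ x + (s : ℂ) * Complex.I * covD2 α 1 φ x‖) ^ 2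
      + (F12 α x + s * (1 / 2) * w x) ^ 2) :=
    fun s => integral_nonneg (fun x => hGnn s x)
  have h1 := main 1 (Or.inl rfl)
  have hm1 := main (-1) (Or.inr rfl)
  have hineq : |∫ x, F12 α x| ≤ ∫ x, e x := by
    rw [abs_le]
    constructor
    · nlinarith [hGint_nn (-1)]
    · nlinarith [hGint_nn 1]
  refine ⟨hineq, ?_, ?_⟩
  · -- equality → Bogomolny equations
    intro heq
    set s : ℝ := if 0 ≤ ∫ x, F12 α x then 1 else -1 with hsdef
    have hs : s = 1 ∨ s = -1 := by
      by_cases h : 0 ≤ ∫ x, F12 α x <;> simp [hsdef, h]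
    have hsF : s * ∫ x, F12 α x = |∫ x, F12 α x| := by
      by_cases h : 0 ≤ ∫ x, F12 α x
      · simp [hsdef, h, abs_of_nonneg h]
      · push_neg at h
        simp [hsdef, not_le.mpr h, abs_of_neg h]
    have hmain := main s hs
    have hGzero : ∫ x, ((‖covD2 α 0 φ x + (s : ℂ) * Complex.I * covD2 α 1 φ x‖) ^ 2
        + (F12 α x + s * (1 / 2) * w x) ^ 2) = 0 := by
      rw [heq, ← hsF] at hmain
      linarith
    -- continuity of the completed integrand
    have hcG : Continuous (fun x => (‖covD2 α 0 φ x + (s : ℂ) * Complex.I * covD2 α 1 φ x‖) ^ 2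
        + (F12 α x + s * (1 / 2) * w x) ^ 2) := by
      have hc1 : Continuous (fun x => covD2 α 0 φ x + (s : ℂ) * Complex.I * covD2 α 1 φ x) :=
        (hcCov 0).add (continuous_const.mul (hcCov 1))
      have hc2 : Continuous (fun x => F12 α x + s * (1 / 2) * w x) :=
        hcF.add (continuous_const.mul hcw)
      exact ((continuous_norm.comp hc1).pow 2).add (hc2.pow 2)
    have hiG : Integrable (fun x => (‖covD2 α 0 φ x + (s : ℂ) * Complex.I * covD2 α 1 φ x‖) ^ 2
        + (F12 α x + s * (1 / 2) * w x) ^ 2) := by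
      refine habs2 _ ?_ ((hcCov 0).add (continuous_const.mul (hcCov 1))) |>.add (hsq _ ?_
        (hcF.add (continuous_const.mul hcw)))
      · refine (hdecay2 0).add ?_
        apply (hdecay2 1).mono
        intro x hx
        simp only [Function.mem_support, ne_eq] at hx ⊢
        intro h; exact hx (by simp [h])
      · refine hdecay3.add ?_
        apply hdecay1.mono
        intro x hx
        simp only [Function.mem_support, ne_eq] at hx ⊢
        intro h
        apply hx
        rw [h]; ring
    have hae := (integral_eq_zero_iff_of_nonneg (fun x => hGnn s x) hiG).mp hGzero
    have hzero : (fun x => (‖covD2 α 0 φ x + (s : ℂ) * Complex.I * covD2 α 1 φ x‖) ^ 2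
        + (F12 α x + s * (1 / 2) * w x) ^ 2) = 0 :=
      (Continuous.ae_eq_iff_eq volume hcG continuous_const).mp hae
    refine ⟨s, hs, by rw [hsF]; exact abs_nonneg _, fun x => ?_⟩
    have hx : (‖covD2 α 0 φ x + (s : ℂ) * Complex.I * covD2 α 1 φ x‖) ^ 2
        + (F12 α x + s * (1 / 2) * w x) ^ 2 = 0 := congrFun hzero x
    have h1 : (‖covD2 α 0 φ x + (s : ℂ) * Complex.I * covD2 α 1 φ x‖) ^ 2 = 0 := by
      nlinarith [sq_nonneg (‖covD2 α 0 φ x + (s : ℂ) * Complex.I * covD2 α 1 φ x‖),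
        sq_nonneg (F12 α x + s * (1 / 2) * w x)]
    have h2 : (F12 α x + s * (1 / 2) * w x) ^ 2 = 0 := by
      nlinarith [sq_nonneg (‖covD2 α 0 φ x + (s : ℂ) * Complex.I * covD2 α 1 φ x‖)]
    constructor
    · have := pow_eq_zero_iff (n := 2) (by norm_num) |>.mp h1
      exact norm_eq_zero.mp this
    · exact pow_eq_zero_iff (n := 2) (by norm_num) |>.mp h2
  · -- Bogomolny equations → equality
    rintro ⟨s, hs, hpos, heqs⟩
    have hmain := main s hs
    have hGzero : ∀ x, (‖covD2 α 0 φ x + (s : ℂ) * Complex.I * covD2 α 1 φ x‖) ^ 2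
        + (F12 α x + s * (1 / 2) * w x) ^ 2 = 0 := by
      intro x
      obtain ⟨hx1, hx2⟩ := heqs x
      rw [hx1, hw]
      simp only [norm_zero]
      rw [show F12 α x + s * (1 / 2) * ((‖φ x‖) ^ 2 - 1) = 0 from hx2]
      norm_num
    have hint0 : ∫ x, ((‖covD2 α 0 φ x + (s : ℂ) * Complex.I * covD2 α 1 φ x‖) ^ 2
        + (F12 α x + s * (1 / 2) * w x) ^ 2) = 0 := by
      simp only [hGzero]
      exact integral_zero _ _
    have hsF : s * ∫ x, F12 α x = |∫ x, F12 α x| := by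
      rcases hs with rfl | rfl
      · rw [one_mul]; exact (abs_of_nonneg (by linarith [hpos])).symm
      · rw [abs_of_nonpos (by linarith [hpos])]; ring
    rw [hmain, hint0, zero_add, hsF]
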